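/- Consider the non-Euclidean composite gradient iteration, and assume in addition that ρ and f are twice continuously differentiable, that μ·D²ρ(x)[u,u] ≤ D²h(x)[u,u] ≤ L·D²ρ(x)[u,u] for all x, u ∈ E, that ρ is uniformly convex of degree p+1 with modulus σ > 0 (i.e., β_ρ(x, y') ≥ (σ/(p+1))·‖y' − x‖^{p+1} for all x, y' ∈ E), and that the operator norm of the second derivative satisfies ‖D²ρ(x)‖ ≤ L̄ for all x ∈ E. For i ≥ 0 set g_{i+1} = 2L(∇ρ(z_i) − ∇ρ(z_{i+1})) − ∇h(z_i). Then for every i ≥ 0: φ(z_i) − φ(z_{i+1}) ≥ C·‖∇h(z_{i+1}) + g_{i+1}‖^{p+1}, where C = L·σ / ((p+1)·(2L − μ)^{p+1}·L̄^{p+1}). -/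

import Mathlib

/-!
Testing the minimality of `z (i + 1)` against `z i` and using the relative `L`-smoothness of `h`
gives `φ (z i) - φ (z (i + 1)) ≥ L β_ρ(z i, z (i + 1)) ≥ L σ / (p + 1) ‖z (i + 1) - z i‖ ^ (p + 1)`.
On the other hand `∇h (z (i + 1)) + g (i + 1) = ∇q (z i) - ∇q (z (i + 1))` for `q = 2Lρ - h`,
whose Bregman distance lies between `L β_ρ ≥ 0` and `(2L - μ) β_ρ ≤ (2L - μ) L̄ / 2 ‖·‖²`.
A convex function with such a quadratic upper bound has a `(2L - μ) L̄`-Lipschitz gradient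
(co-coercivity), so the left-hand side is at most `(2L - μ) L̄ ‖z (i + 1) - z i‖`.
-/

open scoped RealInnerProductSpace
open Set

section Smoothness

variable {F G : Type*} [NormedAddCommGroup F] [NormedSpace ℝ F]
  [NormedAddCommGroup G] [NormedSpace ℝ G]

theorem norm_fderiv_sub_le_of_norm_iteratedFDeriv_two_le {ρ : F → G} (hρ : ContDiff ℝ 2 ρ)
    {K : ℝ} (hK : ∀ x, ‖iteratedFDeriv ℝ 2 ρ x‖ ≤ K) (a b : F) :
    ‖fderiv ℝ ρ a - fderiv ℝ ρ b‖ ≤ K * ‖a - b‖ := by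
  have hdiff : Differentiable ℝ (fderiv ℝ ρ) :=
    (hρ.fderiv_right (m := 1) le_rfl).differentiable one_ne_zero
  refine Convex.norm_image_sub_le_of_norm_fderiv_le (fun x _ => hdiff x) (fun x _ => ?_)
    convex_univ (mem_univ b) (mem_univ a)
  rw [← norm_iteratedFDeriv_one, norm_iteratedFDeriv_fderiv]
  exact hK x

theorem sub_sub_fderiv_le_of_norm_fderiv_sub_le {ρ : F → ℝ} (hρ : Differentiable ℝ ρ) {K : ℝ}
    (hK : ∀ a b, ‖fderiv ℝ ρ a - fderiv ℝ ρ b‖ ≤ K * ‖a - b‖) (x w : F) :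
    ρ w - ρ x - fderiv ℝ ρ x (w - x) ≤ K / 2 * ‖w - x‖ ^ 2 := by
  set v := w - x
  let r : ℝ → ℝ := fun t => ρ (x + t • v) - ρ x - t * fderiv ℝ ρ x v
  have hr : ∀ t, HasDerivAt r (fderiv ℝ ρ (x + t • v) v - fderiv ℝ ρ x v) t := by
    intro t
    have hline : HasDerivAt (fun t : ℝ => x + t • v) v t := by
      simpa using ((hasDerivAt_id t).smul_const v).const_add x
    have := ((hρ (x + t • v)).hasFDerivAt.comp_hasDerivAt t hline).sub_const (ρ x)
    exact this.sub (hasDerivAt_mul_const (fderiv ℝ ρ x v))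
  have hB : ∀ t, HasDerivAt (fun t : ℝ => K / 2 * ‖v‖ ^ 2 * t ^ 2) (K * ‖v‖ ^ 2 * t) t := by
    intro t
    exact ((hasDerivAt_pow 2 t).const_mul (K / 2 * ‖v‖ ^ 2)).congr_deriv (by norm_num; ring)
  have bound : ∀ t ∈ Ico (0 : ℝ) 1,
      ‖fderiv ℝ ρ (x + t • v) v - fderiv ℝ ρ x v‖ ≤ K * ‖v‖ ^ 2 * t := by
    rintro t ⟨ht, -⟩
    calc ‖fderiv ℝ ρ (x + t • v) v - fderiv ℝ ρ x v‖
        ≤ ‖fderiv ℝ ρ (x + t • v) - fderiv ℝ ρ x‖ * ‖v‖ := by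
          rw [← sub_apply]; exact ContinuousLinearMap.le_opNorm _ _
      _ ≤ K * ‖t • v‖ * ‖v‖ := by
          gcongr; simpa using hK (x + t • v) x
      _ = K * ‖v‖ ^ 2 * t := by rw [norm_smul, Real.norm_of_nonneg ht]; ring
  have h1 := image_norm_le_of_norm_deriv_right_le_deriv_boundary
    (fun t _ => (hr t).continuousAt.continuousWithinAt) (fun t _ => (hr t).hasDerivWithinAt)
    (by simp [r]) hB bound (right_mem_Icc.2 zero_le_one)
  simpa [r, v] using (le_abs_self _).trans h1

end Smoothness

section InnerProductSpace

variable {E : Type*} [NormedAddCommGroup E] [InnerProductSpace ℝ E]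

-- The paper's `β_ρ(x, w)`, with `ρ'` standing for `∇ρ`.
def bregman (ρ : E → ℝ) (ρ' : E → E) (x w : E) : ℝ := ρ w - ρ x - ⟪ρ' x, w - x⟫

@[simp]
theorem bregman_self (ρ : E → ℝ) (ρ' : E → E) (x : E) : bregman ρ ρ' x x = 0 := by
  simp [bregman]

theorem bregman_mul_sub (c : ℝ) (ρ h : E → ℝ) (ρ' h' : E → E) (x w : E) :
    bregman (fun x => c * ρ x - h x) (fun x => c • ρ' x - h' x) x w
      = c * bregman ρ ρ' x w - bregman h h' x w := by
  simp only [bregman, inner_sub_left, real_inner_smul_left]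
  ring

theorem bregman_le_of_norm_iteratedFDeriv_two_le [CompleteSpace E] {ρ : E → ℝ} {ρ' : E → E}
    (hρ' : ∀ x, HasGradientAt ρ (ρ' x) x) (hρ : ContDiff ℝ 2 ρ) {K : ℝ}
    (hK : ∀ x, ‖iteratedFDeriv ℝ 2 ρ x‖ ≤ K) (x w : E) :
    bregman ρ ρ' x w ≤ K / 2 * ‖w - x‖ ^ 2 := by
  have := sub_sub_fderiv_le_of_norm_fderiv_sub_le (hρ.differentiable two_ne_zero)
    (norm_fderiv_sub_le_of_norm_iteratedFDeriv_two_le hρ hK) x w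
  rwa [(hρ' x).hasFDerivAt.fderiv, InnerProductSpace.toDual_apply_apply] at this

theorem norm_sub_le_of_bregman_nonneg_of_le {q : E → ℝ} {G : E → E} {M : ℝ} (hM : 0 ≤ M)
    (hlow : ∀ x w, 0 ≤ bregman q G x w) (hup : ∀ x w, bregman q G x w ≤ M / 2 * ‖w - x‖ ^ 2)
    (x w : E) : ‖G w - G x‖ ≤ M * ‖w - x‖ := by
  have three_point : ∀ a b c, bregman q G a c
      = bregman q G a b + bregman q G b c + ⟪G b - G a, c - b⟫ := by
    intro a b c
    simp only [bregman, inner_sub_left, inner_sub_right]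
    ring
  -- Test the lower bound at the point `b - t • (G b - G a)`.
  have hstep : ∀ a b : E, ∀ t : ℝ,
      (t - M / 2 * t ^ 2) * ‖G b - G a‖ ^ 2 ≤ bregman q G a b := by
    intro a b t
    set c := b - t • (G b - G a)
    have h3 := three_point a b c
    rw [sub_sub_cancel_left, inner_neg_right, real_inner_smul_right,
      real_inner_self_eq_norm_sq] at h3
    have hup' : bregman q G b c ≤ M / 2 * (t ^ 2 * ‖G b - G a‖ ^ 2) := (hup b c).trans_eq (by
      rw [sub_sub_cancel_left, norm_neg, norm_smul, Real.norm_eq_abs, mul_pow, sq_abs])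
    nlinarith [hlow a c]
  have hsum : bregman q G x w + bregman q G w x = ⟪G w - G x, w - x⟫ := by
    simp only [bregman, inner_sub_left, inner_sub_right]
    ring
  have hsq : ‖G w - G x‖ ^ 2 ≤ M * ‖G w - G x‖ * ‖w - x‖ := by
    have hcs := real_inner_le_norm (G w - G x) (w - x)
    have h1 := hstep x w
    have h2 := hstep w x
    rw [norm_sub_rev (G x)] at h2
    rcases hM.eq_or_lt with rfl | hMpos
    · nlinarith [h1 1, h2 1, hup x w, hup w x]
    · have hcoef : M⁻¹ - M / 2 * M⁻¹ ^ 2 = M⁻¹ / 2 := by field_simp; ring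
      have h1 := h1 M⁻¹
      have h2 := h2 M⁻¹
      rw [hcoef] at h1 h2
      calc ‖G w - G x‖ ^ 2 = M * (M⁻¹ * ‖G w - G x‖ ^ 2) := by field_simp
        _ ≤ M * (‖G w - G x‖ * ‖w - x‖) := mul_le_mul_of_nonneg_left (by linarith) hMpos.le
        _ = M * ‖G w - G x‖ * ‖w - x‖ := by ring
  by_contra! hlt
  have hMd : 0 ≤ M * ‖w - x‖ := by positivity
  nlinarith [mul_pos (hMd.trans_lt hlt) (sub_pos.2 hlt)]

theorem norm_sub_le_of_relative_bounds {ρ h : E → ℝ} {ρ' h' : E → E} {L μ K : ℝ}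
    (hμ : 0 ≤ μ) (hμL : μ ≤ L) (hK : 0 ≤ K)
    (hrel : ∀ x w, μ * bregman ρ ρ' x w ≤ bregman h h' x w ∧
      bregman h h' x w ≤ L * bregman ρ ρ' x w)
    (hρ_nonneg : ∀ x w, 0 ≤ bregman ρ ρ' x w)
    (hρ_le : ∀ x w, bregman ρ ρ' x w ≤ K / 2 * ‖w - x‖ ^ 2) (x w : E) :
    ‖((2 * L) • ρ' w - h' w) - ((2 * L) • ρ' x - h' x)‖ ≤ (2 * L - μ) * K * ‖w - x‖ := by
  refine norm_sub_le_of_bregman_nonneg_of_le (q := fun x => 2 * L * ρ x - h x)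
    (G := fun x => (2 * L) • ρ' x - h' x) (mul_nonneg (by linarith) hK)
    (fun x w => ?_) (fun x w => ?_) x w <;> rw [bregman_mul_sub]
  · nlinarith [hrel x w, hρ_nonneg x w]
  · nlinarith [hrel x w, hρ_le x w, hρ_nonneg x w]

end InnerProductSpace

-- Also true for `M = 0`, where `c / 0 ^ n = 0` unless `n = 0`.
theorem div_pow_mul_pow_le_of_le_mul {a c d M : ℝ} (n : ℕ) (hc : 0 ≤ c) (ha : 0 ≤ a)
    (hd : 0 ≤ d) (hM : 0 ≤ M) (h : a ≤ M * d) : c / M ^ n * a ^ n ≤ c * d ^ n :=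
  calc c / M ^ n * a ^ n ≤ c / M ^ n * (M * d) ^ n := by gcongr
    _ = c * d ^ n * (M ^ n / M ^ n) := by rw [mul_pow]; ring
    _ ≤ c * d ^ n := mul_le_of_le_one_right (by positivity) (div_self_le_one _)

theorem stmt11_general {E : Type*} [NormedAddCommGroup E] [InnerProductSpace ℝ E]
    [FiniteDimensional ℝ E]
    (s : Set E)
    (ψ : E → ℝ)
    (p : ℕ)
    (y : E) (hy : y ∈ s)
    (h : E → ℝ)
    (h' : E → E)
    (φ : E → ℝ) (hφ : ∀ z, φ z = h z + ψ z)
    (ρ : E → ℝ) (ρ' : E → E) (hρ' : ∀ x, HasGradientAt ρ (ρ' x) x)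
    (Br : E → E → ℝ) (hBr : ∀ x w, Br x w = ρ w - ρ x - ⟪ρ' x, w - x⟫)
    (L μ : ℝ) (hμ : 0 < μ) (hμL : μ ≤ L)
    (hrel : ∀ x w, μ * Br x w ≤ h w - h x - ⟪h' x, w - x⟫ ∧
        h w - h x - ⟪h' x, w - x⟫ ≤ L * Br x w)
    (z : ℕ → E) (hz0 : z 0 = y)
    (hzs : ∀ i, z (i + 1) ∈ s)
    (hzmin : ∀ i : ℕ, ∀ w ∈ s,
        ⟪h' (z i), z (i + 1) - z i⟫ + ψ (z (i + 1)) + 2 * L * Br (z i) (z (i + 1))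
          ≤ ⟪h' (z i), w - z i⟫ + ψ w + 2 * L * Br (z i) w)
    (hρC2 : ContDiff ℝ 2 ρ)
    (σ : ℝ) (hσ : 0 < σ)
    (hunif : ∀ x w : E, Br x w ≥ σ / (p + 1) * ‖w - x‖ ^ (p + 1))
    (Lbar : ℝ) (hLbar : ∀ x : E, ‖iteratedFDeriv ℝ 2 ρ x‖ ≤ Lbar)
    (gs : ℕ → E)
    (hgs : ∀ i : ℕ, gs (i + 1) = (2 * L) • (ρ' (z i) - ρ' (z (i + 1))) - h' (z i)) :
    ∀ i : ℕ, φ (z i) - φ (z (i + 1)) ≥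
      L * σ / ((p + 1) * (2 * L - μ) ^ (p + 1) * Lbar ^ (p + 1)) *
        ‖h' (z (i + 1)) + gs (i + 1)‖ ^ (p + 1) := by
  intro i
  obtain rfl : Br = bregman ρ ρ' := funext fun x => funext (hBr x)
  have hL : 0 < L := hμ.trans_le hμL
  have hLbar_nonneg : 0 ≤ Lbar := (norm_nonneg _).trans (hLbar 0)
  have hBr_nonneg : ∀ x w, 0 ≤ bregman ρ ρ' x w :=
    fun x w => (hunif x w).trans' (by positivity)
  have hG : ‖h' (z (i + 1)) + gs (i + 1)‖ ≤ (2 * L - μ) * Lbar * ‖z (i + 1) - z i‖ := by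
    rw [hgs, norm_sub_rev (z _)]
    convert norm_sub_le_of_relative_bounds hμ.le hμL hLbar_nonneg hrel hBr_nonneg
      (bregman_le_of_norm_iteratedFDeriv_two_le hρ' hρC2 hLbar) (z (i + 1)) (z i) using 2
    module
  have hdescent : L * bregman ρ ρ' (z i) (z (i + 1)) ≤ φ (z i) - φ (z (i + 1)) := by
    have hzi : z i ∈ s := by cases i with
      | zero => rwa [hz0]
      | succ j => exact hzs j
    have hmin := hzmin i (z i) hzi
    rw [bregman_self, sub_self, inner_zero_right] at hmin
    rw [hφ, hφ]
    linarith [(hrel (z i) (z (i + 1))).2]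
  calc L * σ / ((p + 1) * (2 * L - μ) ^ (p + 1) * Lbar ^ (p + 1)) *
        ‖h' (z (i + 1)) + gs (i + 1)‖ ^ (p + 1)
      = L * σ / (p + 1) / ((2 * L - μ) * Lbar) ^ (p + 1) *
        ‖h' (z (i + 1)) + gs (i + 1)‖ ^ (p + 1) := by rw [mul_pow, div_div, ← mul_assoc]
    _ ≤ L * σ / (p + 1) * ‖z (i + 1) - z i‖ ^ (p + 1) :=
      div_pow_mul_pow_le_of_le_mul _ (by positivity) (norm_nonneg _) (norm_nonneg _)
        (mul_nonneg (by linarith) hLbar_nonneg) hG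
    _ = L * (σ / (p + 1) * ‖z (i + 1) - z i‖ ^ (p + 1)) := by ring
    _ ≤ L * bregman ρ ρ' (z i) (z (i + 1)) := mul_le_mul_of_nonneg_left (hunif _ _) hL.le
    _ ≤ φ (z i) - φ (z (i + 1)) := hdescent

theorem stmt11 {E : Type*} [NormedAddCommGroup E] [InnerProductSpace ℝ E]
    [FiniteDimensional ℝ E]
    (s : Set E) (hs : s.Nonempty) (hsconv : Convex ℝ s)
    (ψ : E → ℝ) (hψ : ConvexOn ℝ s ψ)
    (f : E → ℝ) (f' : E → E) (hf' : ∀ x, HasGradientAt f (f' x) x)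
    (hfconv : ConvexOn ℝ Set.univ f)
    (p : ℕ) (hp : 1 ≤ p)
    (y : E) (hy : y ∈ s) (H : ℝ) (hH : 0 < H)
    (h : E → ℝ) (hhdef : ∀ z, h z = f z + H * (‖z - y‖ ^ (p + 1) / (p + 1)))
    (h' : E → E) (hh' : ∀ x, HasGradientAt h (h' x) x)
    (φ : E → ℝ) (hφ : ∀ z, φ z = h z + ψ z)
    (ρ : E → ℝ) (ρ' : E → E) (hρ' : ∀ x, HasGradientAt ρ (ρ' x) x)
    (hρconv : ConvexOn ℝ Set.univ ρ)
    (Br : E → E → ℝ) (hBr : ∀ x w, Br x w = ρ w - ρ x - ⟪ρ' x, w - x⟫)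
    (L μ : ℝ) (hμ : 0 < μ) (hμL : μ ≤ L)
    (hrel : ∀ x w, μ * Br x w ≤ h w - h x - ⟪h' x, w - x⟫ ∧
        h w - h x - ⟪h' x, w - x⟫ ≤ L * Br x w)
    (z : ℕ → E) (hz0 : z 0 = y)
    (hzs : ∀ i, z (i + 1) ∈ s)
    (hzmin : ∀ i : ℕ, ∀ w ∈ s,
        ⟪h' (z i), z (i + 1) - z i⟫ + ψ (z (i + 1)) + 2 * L * Br (z i) (z (i + 1))
          ≤ ⟪h' (z i), w - z i⟫ + ψ w + 2 * L * Br (z i) w)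
    (hρC2 : ContDiff ℝ 2 ρ) (hfC2 : ContDiff ℝ 2 f)
    (hsand : ∀ x u : E,
        μ * iteratedFDeriv ℝ 2 ρ x (fun _ => u) ≤ iteratedFDeriv ℝ 2 h x (fun _ => u) ∧
        iteratedFDeriv ℝ 2 h x (fun _ => u) ≤ L * iteratedFDeriv ℝ 2 ρ x (fun _ => u))
    (σ : ℝ) (hσ : 0 < σ)
    (hunif : ∀ x w : E, Br x w ≥ σ / (p + 1) * ‖w - x‖ ^ (p + 1))
    (Lbar : ℝ) (hLbar : ∀ x : E, ‖iteratedFDeriv ℝ 2 ρ x‖ ≤ Lbar)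
    (gs : ℕ → E)
    (hgs : ∀ i : ℕ, gs (i + 1) = (2 * L) • (ρ' (z i) - ρ' (z (i + 1))) - h' (z i)) :
    ∀ i : ℕ, φ (z i) - φ (z (i + 1)) ≥
      L * σ / ((p + 1) * (2 * L - μ) ^ (p + 1) * Lbar ^ (p + 1)) *
        ‖h' (z (i + 1)) + gs (i + 1)‖ ^ (p + 1) :=
  stmt11_general s ψ p y hy h h' φ hφ ρ ρ' hρ' Br hBr L μ hμ hμL hrel z hz0 hzs hzmin hρC2 σ hσ
    hunif Lbar hLbar gs hgs
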